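/- Let X be a compact Hausdorff space, A a C(X)-algebra, and Y, Z closed subsets with X = Y ∪ Z. Then A is isomorphic to the pullback A(Y) ⊕_{π,π} A(Z) = {(b,c) ∈ A(Y) ⊕ A(Z) : π^Y_{Y∩Z}(b) = π^Z_{Y∩Z}(c)} of the restriction maps to Y ∩ Z. -/

import Mathlib

variable {X : Type*} [TopologicalSpace X] [CompactSpace X] [T2Space X]
variable {A : Type*} [NonUnitalCStarAlgebra A]
variable [Module C(X, ℂ) A] [IsScalarTower C(X, ℂ) A A] [SMulCommClass C(X, ℂ) A A]
variable [StarModule C(X, ℂ) A]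

/-- For a closed set `S ⊆ X`, the closed two-sided ideal `C(X, S)·A` of the
`C(X)`-algebra `A`: the closure of the linear span of `{f • a : f vanishes on S}`.
The restriction `A(S)` is the quotient of `A` by this ideal, with quotient map `π_S`. -/
def fiberIdeal (S : Set X) (A : Type*) [NonUnitalCStarAlgebra A] [Module C(X, ℂ) A] :
    Set A :=
  closure (Submodule.span ℂ
    {y : A | ∃ (f : C(X, ℂ)) (c : A), (∀ x ∈ S, f x = 0) ∧ y = f • c} : Set A)

/-!
Injectivity: if `a` lies in both ideals, so does `star a`, and `star a * a` is then a product of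
an element of `C(X,Y)·A` with one of `C(X,Z)·A`. Such products vanish because `f * g = 0` whenever
`f` vanishes on `Y`, `g` on `Z` and `Y ∪ Z = X`; the C⋆-identity gives `a = 0`.

Surjectivity amounts to `C(X,Y∩Z)·A ⊆ C(X,Y)·A + C(X,Z)·A`. Cutting along `Y`, a function
vanishing on `Y ∩ Z` is a sum `g + h` with `g` vanishing on `Y` and `h` on `Z`, and with
`|g|, |h|` bounded by the original function. Each `s` in the span of the generators has an
approximate unit: `‖t • s‖` is small for a contraction `t` equal to `1` on `Y ∩ Z`. Splitting
`1 - t` writes `s`, up to a small error that stays in the ideal, as `g • s + h • s` with both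
terms of norm at most `2‖s‖`, because `‖f • a‖ ≤ ‖f‖ ‖a‖` (again by the C⋆-identity).
Iterating on the error gives two absolutely convergent series, with sums in `C(X,Y)·A` and in
`C(X,Z)·A`, that add up to the given element.
-/

open Set Filter Topology

section CStarAlgebra

variable {E : Type*} [NonUnitalCStarAlgebra E]

-- No compatibility between the `R`- and the `ℂ`-action is assumed: the C⋆-identity forces it.
theorem smul_complex_smul_comm_of_isScalarTower {R : Type*} [Monoid R] [DistribMulAction R E]
    [IsScalarTower R E E] (r : R) (z : ℂ) (a : E) : r • z • a = z • r • a := by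
  set d := r • z • a - z • r • a
  have hd : ∀ b : E, d * b = 0 := fun b => by
    simp only [d, sub_mul, smul_mul_assoc, sub_eq_zero]
    rw [← mul_smul_comm, ← smul_mul_assoc, mul_smul_comm, smul_mul_assoc]
  simpa [d, sub_eq_zero] using (CStarRing.mul_star_self_eq_zero_iff d).1 (hd (star d))

theorem norm_star_mul_self_le_norm_add (u v : E) :
    ‖star u * u‖ ≤ ‖star u * u + star v * v‖ :=
  letI := CStarAlgebra.spectralOrder E
  haveI := CStarAlgebra.spectralOrderedRing E
  CStarAlgebra.norm_le_norm_of_nonneg_of_le (star_mul_self_nonneg u)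
    (le_add_of_nonneg_right (star_mul_self_nonneg v))

end CStarAlgebra

theorem AddSubgroup.mem_sup_of_hasSum_add {E ι : Type*} [AddCommGroup E] [TopologicalSpace E]
    [T2Space E] [ContinuousAdd E] {M N : AddSubgroup E} (hM : IsClosed (M : Set E))
    (hN : IsClosed (N : Set E)) {Y Z : ι → E} (hYM : ∀ i, Y i ∈ M) (hZN : ∀ i, Z i ∈ N)
    (hY : Summable Y) (hZ : Summable Z) {e : E} (he : HasSum (fun i => Y i + Z i) e) :
    e ∈ M ⊔ N :=
  AddSubgroup.mem_sup.2
    ⟨_, tsum_mem hM hYM, _, tsum_mem hN hZN, (hY.hasSum.add hZ.hasSum).unique he⟩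

theorem AddSubgroup.mem_sup_of_forall_exists_approx {E : Type*} [NormedAddCommGroup E]
    [CompleteSpace E] {M N : AddSubgroup E} (hM : IsClosed (M : Set E)) (hN : IsClosed (N : Set E))
    {K : Set E} {C : ℝ} (hC : 0 ≤ C)
    (hK : ∀ e ∈ K, ∀ δ > 0, ∃ y ∈ M, ∃ z ∈ N, ‖y‖ ≤ C * ‖e‖ + δ ∧ ‖z‖ ≤ C * ‖e‖ + δ ∧
      e - (y + z) ∈ K ∧ ‖e - (y + z)‖ ≤ δ)
    {e : E} (he : e ∈ K) : e ∈ M ⊔ N := by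
  choose! y hyM z hzN hy hz hK hr using hK
  let δ : ℕ → ℝ := fun n => (1 / 2) ^ (n + 1)
  have hδ : ∀ n, 0 < δ n := fun n => by positivity
  let r : ℕ → E := fun n => Nat.rec e (fun n rn => rn - (y rn (δ n) + z rn (δ n))) n
  have hr_mem : ∀ n, r n ∈ K := fun n => by
    induction n with
    | zero => exact he
    | succ n ih => exact hK _ ih _ (hδ n)
  set Y : ℕ → E := fun n => y (r n) (δ n)
  set Z : ℕ → E := fun n => z (r n) (δ n)
  have hr_zero : r 0 = e := rfl
  have hr_succ : ∀ n, r (n + 1) = r n - (Y n + Z n) := fun n => rfl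
  have hr_le : ∀ n, ‖r n‖ ≤ (‖e‖ + 1) * (1 / 2) ^ n := fun n => by
    cases n with
    | zero => simp [hr_zero]
    | succ n =>
      calc ‖r (n + 1)‖ ≤ δ n := hr _ (hr_mem n) _ (hδ n)
        _ ≤ (‖e‖ + 1) * (1 / 2) ^ (n + 1) := le_mul_of_one_le_left (by positivity) (by simp)
  have hbound : ∀ w : E, ∀ n, ‖w‖ ≤ C * ‖r n‖ + δ n →
      ‖w‖ ≤ (C * (‖e‖ + 1) + 1) * (1 / 2) ^ n := fun w n hw => by
    have : δ n ≤ (1 / 2) ^ n := pow_le_pow_of_le_one (by norm_num) (by norm_num) n.le_succ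
    nlinarith [hr_le n, pow_pos (show (0 : ℝ) < 1 / 2 by norm_num) n]
  have hgeom : Summable fun n => (C * (‖e‖ + 1) + 1) * (1 / 2 : ℝ) ^ n :=
    summable_geometric_two.mul_left _
  have hY : Summable Y :=
    .of_norm_bounded hgeom fun n => hbound _ n (hy _ (hr_mem n) _ (hδ n))
  have hZ : Summable Z :=
    .of_norm_bounded hgeom fun n => hbound _ n (hz _ (hr_mem n) _ (hδ n))
  have hr_lim : Tendsto r atTop (𝓝 0) := squeeze_zero_norm hr_le <| by
    simpa using (tendsto_pow_atTop_nhds_zero_of_lt_one (by norm_num : (0 : ℝ) ≤ 1 / 2)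
      (by norm_num)).const_mul (‖e‖ + 1)
  have hpartial : (fun n => ∑ i ∈ Finset.range n, (Y i + Z i)) = fun n => e - r n := by
    ext n
    rw [← hr_zero, ← Finset.sum_range_sub' r n]
    exact Finset.sum_congr rfl fun i _ => by rw [hr_succ, sub_sub_cancel]
  refine AddSubgroup.mem_sup_of_hasSum_add hM hN (fun n => hyM _ (hr_mem n) _ (hδ n))
    (fun n => hzN _ (hr_mem n) _ (hδ n)) hY hZ ?_
  rw [(hY.add hZ).hasSum_iff_tendsto_nat, hpartial]
  simpa using tendsto_const_nhds.sub hr_lim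

theorem ContinuousMap.exists_norm_le_one_eqOn_one_norm_mul_le {T : Type*} [TopologicalSpace T]
    [CompactSpace T] (f : C(T, ℂ)) {ε : ℝ} (hε : 0 < ε) :
    ∃ t : C(T, ℂ), ‖t‖ ≤ 1 ∧ EqOn t 1 {x | f x = 0} ∧ ‖t * f‖ ≤ ε := by
  refine ⟨⟨fun x => ((max 0 (1 - ‖f x‖ / ε) : ℝ) : ℂ), by fun_prop⟩, ?_, fun x hx => ?_, ?_⟩
  · refine (ContinuousMap.norm_le _ zero_le_one).2 fun x => ?_
    simp only [ContinuousMap.coe_mk, Complex.norm_real, Real.norm_eq_abs,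
      abs_of_nonneg (le_max_left (0 : ℝ) _)]
    exact max_le zero_le_one (sub_le_self _ (by positivity))
  · simp [show f x = 0 from hx]
  · refine (ContinuousMap.norm_le _ hε.le).2 fun x => ?_
    simp only [ContinuousMap.mul_apply, ContinuousMap.coe_mk, norm_mul, Complex.norm_real,
      Real.norm_eq_abs, abs_of_nonneg (le_max_left (0 : ℝ) _)]
    rcases le_total ‖f x‖ ε with hx | hx
    · have : max 0 (1 - ‖f x‖ / ε) ≤ 1 := max_le zero_le_one (sub_le_self _ (by positivity))
      nlinarith [norm_nonneg (f x)]
    · rw [max_eq_left (sub_nonpos.2 ((one_le_div hε).2 hx)), zero_mul]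
      exact hε.le

theorem ContinuousMap.exists_eqOn_zero_eqOn {T E : Type*} [TopologicalSpace T]
    [TopologicalSpace E] [Zero E] {Y Z : Set T} (hY : IsClosed Y) (hZ : IsClosed Z)
    (hYZ : Y ∪ Z = univ) (φ : C(T, E)) (hφ : EqOn φ 0 (Y ∩ Z)) :
    ∃ g : C(T, E), EqOn g 0 Y ∧ EqOn g φ Z := by
  classical
  have hfrontier : frontier Y ⊆ Y ∩ Z := fun x hx =>
    ⟨hY.frontier_subset hx, closure_minimal (fun x hx => (hYZ ▸ mem_univ x).resolve_left hx) hZ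
      (frontier_subset_closure (frontier_compl Y ▸ hx))⟩
  refine ⟨⟨Y.piecewise 0 φ, continuous_const.piecewise (fun x hx => (hφ (hfrontier hx)).symm)
    φ.continuous⟩, fun x hx => piecewise_eq_of_mem _ _ _ hx, fun x hx => ?_⟩
  by_cases hxY : x ∈ Y
  · simpa [piecewise_eq_of_mem _ _ _ hxY] using (hφ ⟨hxY, hx⟩).symm
  · exact piecewise_eq_of_notMem _ _ _ hxY

section

omit [T2Space X]

omit [CompactSpace X] in
theorem star_smul_mul_smul (g : C(X, ℂ)) (a : A) :
    star (g • a) * (g • a) = (star g * g) • (star a * a) := by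
  rw [star_smul, smul_mul_smul_comm]

theorem sq_norm_smul_le_ratCast_mul (g : C(X, ℂ)) (a : A) (c : ℚ) (hg : ‖g‖ ^ 2 ≤ c) :
    ‖g • a‖ ^ 2 ≤ c * ‖a‖ ^ 2 := by
  have hgx : ∀ x, ‖g x‖ ^ 2 ≤ c := fun x =>
    (pow_le_pow_left₀ (norm_nonneg _) (g.norm_coe_le_norm x) 2).trans hg
  -- `h` completes `g` to `star g * g + star h * h = c`, which dominates `star g * g`.
  let h : C(X, ℂ) := ⟨fun x => ((√(c - ‖g x‖ ^ 2) : ℝ) : ℂ), by fun_prop⟩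
  have hgh : star g * g + star h * h = (c : ℂ) • 1 := by
    ext x
    have hx : ((c : ℝ) - ‖g x‖ ^ 2) = √(c - ‖g x‖ ^ 2) * √(c - ‖g x‖ ^ 2) :=
      (Real.mul_self_sqrt (sub_nonneg.2 (hgx x))).symm
    simp only [ContinuousMap.add_apply, ContinuousMap.mul_apply, ContinuousMap.star_apply,
      ContinuousMap.smul_apply, ContinuousMap.one_apply, ContinuousMap.coe_mk, h,
      Complex.star_def, Complex.conj_ofReal, ← Complex.normSq_eq_conj_mul_self, smul_eq_mul,
      mul_one, Complex.normSq_eq_norm_sq]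
    rw [← Complex.ofReal_mul, ← hx]
    push_cast
    ring
  have hc : (0 : ℝ) ≤ c := (sq_nonneg _).trans hg
  calc ‖g • a‖ ^ 2 = ‖star (g • a) * (g • a)‖ := by rw [CStarRing.norm_star_mul_self, sq]
    _ ≤ ‖star (g • a) * (g • a) + star (h • a) * (h • a)‖ := norm_star_mul_self_le_norm_add _ _
    _ = ‖((c : ℂ) • (1 : C(X, ℂ))) • (star a * a)‖ := by
      rw [star_smul_mul_smul, star_smul_mul_smul, ← add_smul, hgh]
    _ = ‖(c : ℝ) • (star a * a)‖ := by
      congr 1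
      simpa using map_ratCast_smul ((smulAddHom C(X, ℂ) A).flip (star a * a)) ℂ ℝ c 1
    _ = c * ‖a‖ ^ 2 := by
      rw [norm_smul, CStarRing.norm_star_mul_self, Real.norm_of_nonneg hc, sq]

theorem norm_continuousMap_smul_le (f : C(X, ℂ)) (a : A) : ‖f • a‖ ≤ ‖f‖ * ‖a‖ := by
  rcases eq_or_ne a 0 with rfl | ha
  · simp
  have ha' : 0 < ‖a‖ ^ 2 := by positivity
  -- The module structure is only known to be `ℚ`-linear in `f`, hence the rational bounds.
  have hquot : ‖f • a‖ ^ 2 / ‖a‖ ^ 2 ≤ ‖f‖ ^ 2 := le_of_forall_lt_rat_imp_le fun q hq => by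
    rw [div_le_iff₀ ha']
    exact sq_norm_smul_le_ratCast_mul f a q hq.le
  rw [div_le_iff₀ ha', ← mul_pow] at hquot
  exact (pow_le_pow_iff_left₀ (norm_nonneg _) (by positivity) two_ne_zero).1 hquot

variable (A) in
def fiberSpan (S : Set X) : Submodule ℂ A :=
  Submodule.span ℂ {y : A | ∃ (f : C(X, ℂ)) (c : A), (∀ x ∈ S, f x = 0) ∧ y = f • c}

omit [CompactSpace X] [IsScalarTower C(X, ℂ) A A] [SMulCommClass C(X, ℂ) A A]
  [StarModule C(X, ℂ) A] in
theorem smul_mem_fiberSpan {S : Set X} {f : C(X, ℂ)} (hf : EqOn f 0 S) (c : A) :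
    f • c ∈ fiberSpan A S :=
  Submodule.subset_span ⟨f, c, fun _ hx => hf hx, rfl⟩

omit [CompactSpace X] [IsScalarTower C(X, ℂ) A A] [SMulCommClass C(X, ℂ) A A] in
theorem star_mem_fiberIdeal {S : Set X} {a : A} (ha : a ∈ fiberIdeal S A) :
    star a ∈ fiberIdeal S A := by
  refine map_mem_closure continuous_star ha fun b (hb : b ∈ fiberSpan A S) => ?_
  induction hb using Submodule.span_induction with
  | mem _ h =>
    obtain ⟨f, c, hf, rfl⟩ := h
    rw [star_smul]
    exact smul_mem_fiberSpan (fun x hx => by simp [hf x hx]) _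
  | zero => simp
  | add _ _ _ _ hx hy => rw [star_add]; exact add_mem hx hy
  | smul z _ _ h => rw [star_smul]; exact Submodule.smul_mem _ _ h

omit [CompactSpace X] [StarModule C(X, ℂ) A] in
theorem mul_eq_zero_of_mem_fiberIdeal {Y Z : Set X} (hYZ : Y ∪ Z = univ) {a b : A}
    (ha : a ∈ fiberIdeal Y A) (hb : b ∈ fiberIdeal Z A) : a * b = 0 := by
  have hspan : ∀ a ∈ fiberSpan A Y, ∀ b ∈ fiberSpan A Z, a * b ∈ ({0} : Set A) := by
    intro a ha b hb
    induction ha, hb using Submodule.span_induction₂ with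
    | mem_mem _ _ ha hb =>
      obtain ⟨f, c, hf, rfl⟩ := ha
      obtain ⟨g, d, hg, rfl⟩ := hb
      have hfg : f * g = 0 := by
        ext x
        rcases (hYZ ▸ mem_univ x : x ∈ Y ∪ Z) with hx | hx
        · simp [hf x hx]
        · simp [hg x hx]
      rw [smul_mul_smul_comm, hfg]
      exact zero_smul C(X, ℂ) (c * d)
    | _ => simp_all [add_mul, mul_add, smul_mul_assoc, mul_smul_comm]
  simpa using map_mem_closure₂ continuous_mul ha hb hspan

omit [CompactSpace X] in
theorem eq_zero_of_mem_fiberIdeal_of_mem_fiberIdeal {Y Z : Set X} (hYZ : Y ∪ Z = univ) {a : A}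
    (hY : a ∈ fiberIdeal Y A) (hZ : a ∈ fiberIdeal Z A) : a = 0 :=
  (CStarRing.star_mul_self_eq_zero_iff a).1
    (mul_eq_zero_of_mem_fiberIdeal hYZ (star_mem_fiberIdeal hY) hZ)

theorem exists_norm_le_one_eqOn_one_norm_smul_lt {S : Set X} {s : A} (hs : s ∈ fiberSpan A S)
    {ε : ℝ} (hε : 0 < ε) : ∃ t : C(X, ℂ), ‖t‖ ≤ 1 ∧ EqOn t 1 S ∧ ‖t • s‖ < ε := by
  induction hs using Submodule.span_induction generalizing ε with
  | mem _ h =>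
    obtain ⟨f, c, hf, rfl⟩ := h
    obtain ⟨t, ht, htf, htf_le⟩ :=
      f.exists_norm_le_one_eqOn_one_norm_mul_le (show 0 < ε / (‖c‖ + 1) by positivity)
    refine ⟨t, ht, fun x hx => htf (hf x hx), ?_⟩
    calc ‖t • f • c‖ ≤ ‖t * f‖ * ‖c‖ := by rw [← mul_smul]; exact norm_continuousMap_smul_le _ _
      _ ≤ ε / (‖c‖ + 1) * ‖c‖ := by gcongr
      _ < ε := by rw [div_mul_eq_mul_div, div_lt_iff₀ (by positivity)]; nlinarith
  | zero => exact ⟨1, (ContinuousMap.norm_le _ zero_le_one).2 (by simp), fun _ _ => rfl, by simpa⟩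
  | add x y _ _ hx hy =>
    obtain ⟨t, ht, htS, htx⟩ := hx (half_pos hε)
    obtain ⟨u, hu, huS, huy⟩ := hy (half_pos hε)
    -- `t` and `u` are contractions, so `t * u` is as good as `t` on `x` and as `u` on `y`.
    refine ⟨t * u, (norm_mul_le t u).trans (mul_le_one₀ ht (norm_nonneg _) hu),
      fun x hx => by simp [htS hx, huS hx], ?_⟩
    calc ‖(t * u) • (x + y)‖ = ‖u • t • x + t • u • y‖ := by
          rw [smul_add, ← mul_smul, ← mul_smul, mul_comm u t]
      _ ≤ ‖u • t • x‖ + ‖t • u • y‖ := norm_add_le _ _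
      _ ≤ ‖t • x‖ + ‖u • y‖ := by
          gcongr
          · exact (norm_continuousMap_smul_le _ _).trans (mul_le_of_le_one_left (norm_nonneg _) hu)
          · exact (norm_continuousMap_smul_le _ _).trans (mul_le_of_le_one_left (norm_nonneg _) ht)
      _ < ε := by linarith
  | smul z x _ hx =>
    obtain ⟨t, ht, htS, htx⟩ := hx (show 0 < ε / (‖z‖ + 1) by positivity)
    refine ⟨t, ht, htS, ?_⟩
    rw [smul_complex_smul_comm_of_isScalarTower, norm_smul]
    calc ‖z‖ * ‖t • x‖ ≤ (‖z‖ + 1) * ‖t • x‖ := by gcongr; linarith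
      _ < ε := by rwa [← lt_div_iff₀' (by positivity)]

theorem exists_eqOn_zero_eqOn_zero_norm_sub_smul_lt {Y Z : Set X} (hY : IsClosed Y)
    (hZ : IsClosed Z) (hYZ : Y ∪ Z = univ) {s : A} (hs : s ∈ fiberSpan A (Y ∩ Z)) {ε : ℝ}
    (hε : 0 < ε) : ∃ g h : C(X, ℂ), EqOn g 0 Y ∧ EqOn h 0 Z ∧ ‖g‖ ≤ 2 ∧ ‖h‖ ≤ 2 ∧
      ‖s - (g + h) • s‖ < ε := by
  obtain ⟨t, ht, htS, hts⟩ := exists_norm_le_one_eqOn_one_norm_smul_lt hs hε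
  obtain ⟨g, hgY, hgZ⟩ := (1 - t).exists_eqOn_zero_eqOn hY hZ hYZ fun x hx => by simp [htS hx]
  have hφ : ∀ x, ‖(1 - t) x‖ ≤ 2 := fun x => by
    rw [ContinuousMap.sub_apply, ContinuousMap.one_apply, one_add_one_eq_two.symm]
    exact (norm_sub_le _ _).trans (by simpa using (t.norm_coe_le_norm x).trans ht)
  refine ⟨g, 1 - t - g, hgY, fun x hx => by simp [hgZ hx], ?_, ?_, ?_⟩
  · refine (ContinuousMap.norm_le _ zero_le_two).2 fun x => ?_
    rcases (hYZ ▸ mem_univ x : x ∈ Y ∪ Z) with hx | hx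
    · simp [hgY hx]
    · rw [hgZ hx]; exact hφ x
  · refine (ContinuousMap.norm_le _ zero_le_two).2 fun x => ?_
    rcases (hYZ ▸ mem_univ x : x ∈ Y ∪ Z) with hx | hx
    · simpa [hgY hx] using hφ x
    · simp [hgZ hx]
  · rwa [add_sub_cancel, sub_smul, one_smul, sub_sub_cancel]

theorem exists_approx_of_mem_fiberIdeal_inter {Y Z : Set X} (hY : IsClosed Y) (hZ : IsClosed Z)
    (hYZ : Y ∪ Z = univ) {e : A} (he : e ∈ fiberIdeal (Y ∩ Z) A) {δ : ℝ} (hδ : 0 < δ) :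
    ∃ y ∈ fiberIdeal Y A, ∃ z ∈ fiberIdeal Z A, ‖y‖ ≤ 2 * ‖e‖ + δ ∧ ‖z‖ ≤ 2 * ‖e‖ + δ ∧
      e - (y + z) ∈ fiberIdeal (Y ∩ Z) A ∧ ‖e - (y + z)‖ ≤ δ := by
  obtain ⟨s, hs, hes⟩ := Metric.mem_closure_iff.1 he (δ / 4) (by positivity)
  obtain ⟨g, h, hgY, hhZ, hg, hh, hghs⟩ :=
    exists_eqOn_zero_eqOn_zero_norm_sub_smul_lt hY hZ hYZ hs (half_pos hδ)
  have hs_le : ‖s‖ ≤ ‖e‖ + δ / 4 := by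
    have := norm_sub_norm_le s e; rw [norm_sub_rev, ← dist_eq_norm] at this; linarith
  have hsmul_le : ∀ k : C(X, ℂ), ‖k‖ ≤ 2 → ‖k • s‖ ≤ 2 * ‖e‖ + δ := fun k hk => calc
    ‖k • s‖ ≤ ‖k‖ * ‖s‖ := norm_continuousMap_smul_le _ _
    _ ≤ 2 * (‖e‖ + δ / 4) := by gcongr
    _ ≤ 2 * ‖e‖ + δ := by linarith
  have hgh : EqOn (g + h) 0 (Y ∩ Z) := fun x hx => by simp [hgY hx.1, hhZ hx.2]
  refine ⟨g • s, subset_closure (smul_mem_fiberSpan hgY s), h • s,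
    subset_closure (smul_mem_fiberSpan hhZ s), hsmul_le g hg, hsmul_le h hh, ?_, ?_⟩
  · rw [← add_smul]
    exact (fiberSpan A (Y ∩ Z)).topologicalClosure.sub_mem he
      (subset_closure (smul_mem_fiberSpan hgh s))
  · calc ‖e - (g • s + h • s)‖ = ‖(e - s) + (s - (g + h) • s)‖ := by rw [add_smul]; abel_nf
      _ ≤ ‖e - s‖ + ‖s - (g + h) • s‖ := norm_add_le _ _
      _ ≤ δ := by rw [← dist_eq_norm]; linarith

theorem mem_sup_of_mem_fiberIdeal_inter {Y Z : Set X} (hY : IsClosed Y) (hZ : IsClosed Z)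
    (hYZ : Y ∪ Z = univ) {e : A} (he : e ∈ fiberIdeal (Y ∩ Z) A) :
    e ∈ (fiberSpan A Y).topologicalClosure.toAddSubgroup ⊔
      (fiberSpan A Z).topologicalClosure.toAddSubgroup :=
  AddSubgroup.mem_sup_of_forall_exists_approx (Submodule.isClosed_topologicalClosure _)
    (Submodule.isClosed_topologicalClosure _) zero_le_two
    (fun _ he _ hδ => exists_approx_of_mem_fiberIdeal_inter hY hZ hYZ he hδ) he

end

/-- The two conjuncts say that `a ↦ (π_Y a, π_Z a)` is injective and maps onto the pullback
`{(b, c) : π^Y_{Y∩Z} b = π^Z_{Y∩Z} c}`. -/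
theorem stmt14 (Y Z : Set X) (hY : IsClosed Y) (hZ : IsClosed Z)
    (hYZ : Y ∪ Z = Set.univ) :
    (∀ a : A, a ∈ fiberIdeal Y A → a ∈ fiberIdeal Z A → a = 0) ∧
      (∀ b c : A, b - c ∈ fiberIdeal (Y ∩ Z) A →
        ∃ a : A, a - b ∈ fiberIdeal Y A ∧ a - c ∈ fiberIdeal Z A) := by
  refine ⟨fun a => eq_zero_of_mem_fiberIdeal_of_mem_fiberIdeal hYZ, fun b c hbc => ?_⟩
  obtain ⟨y, hy, z, hz, hyz⟩ :=
    AddSubgroup.mem_sup.1 (mem_sup_of_mem_fiberIdeal_inter hY hZ hYZ hbc)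
  refine ⟨b - y, ?_, ?_⟩
  · rw [sub_sub_cancel_left]
    exact neg_mem hy
  · rwa [sub_right_comm, ← hyz, add_sub_cancel_left]
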